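/- arXiv:2507.11701 — 6 statements merged into one kernel-verified Lean document; each statement's English description precedes it below -/
import Mathlib

section
/- Let S⊆[n] with 1∈S, and let T = {1} ∪ {i+1 : i∈S, 1<i<n}. Then the map π ↦ f∘π, where f(1)=1 and f(x)=x+1 for x≠1, is a bijection from S-restricted prime parking functions on n cars to T-restricted parking functions on n cars. Hence #PPF_{n|S} = #PF_{n|T}. -/
/-!
Shifting every value `x ≠ 1` up by one turns the counting condition `#{π ≤ i} > i` of a prime
parking function at `i` into the condition `#{σ ≤ i + 1} ≥ i + 1` of a parking function at
`i + 1`, while the value `1` stays put and keeps the condition at `1`. A prime parking function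
never takes the value `n` (for `n ≥ 2` the condition at `n - 1` forces all values below `n`), which
is exactly what is needed for the shifted values to stay in `[n]`; `T` is by construction the set of
shifted values of `S` that survive.
-/

def IsPF (n : ℕ) (π : Fin n → ℕ) : Prop :=
  (∀ j, π j ∈ Finset.Icc 1 n) ∧
  ∀ i ∈ Finset.Icc 1 n, i ≤ (Finset.univ.filter (fun j => π j ≤ i)).card

def IsPPF (n : ℕ) (π : Fin n → ℕ) : Prop :=
  (∀ j, π j ∈ Finset.Icc 1 n) ∧
  ∀ i ∈ Finset.Icc 1 (n - 1), i < (Finset.univ.filter (fun j => π j ≤ i)).card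

open Finset

def shiftUp (x : ℕ) : ℕ := if x = 1 then 1 else x + 1

lemma shiftUp_le_succ_iff {x i : ℕ} (hi : 1 ≤ i) : shiftUp x ≤ i + 1 ↔ x ≤ i := by
  unfold shiftUp; split_ifs <;> omega

lemma shiftUp_le_one_iff {x : ℕ} : shiftUp x ≤ 1 ↔ x ≤ 1 := by
  unfold shiftUp; split_ifs <;> omega

lemma shiftUp_mem_Icc_iff {x n : ℕ} :
    shiftUp x ∈ Icc 1 n ↔ 1 ≤ n ∧ (x = 1 ∨ x < n) := by
  unfold shiftUp; split_ifs <;> simp only [mem_Icc] <;> omega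

lemma shiftUp_injOn : Set.InjOn shiftUp {x | 1 ≤ x} := by
  intro x (hx : 1 ≤ x) y (hy : 1 ≤ y) h
  unfold shiftUp at h
  split_ifs at h <;> omega

lemma injOn_shiftUp_comp {n : ℕ} :
    Set.InjOn (fun π : Fin n → ℕ => shiftUp ∘ π) {π | ∀ j, 1 ≤ π j} :=
  fun _ hπ _ hπ' h => funext fun j => shiftUp_injOn (hπ j) (hπ' j) (congrFun h j)

namespace IsPPF

variable {n : ℕ} {π : Fin n → ℕ}

lemma one_le (hπ : IsPPF n π) (j : Fin n) : 1 ≤ π j := (mem_Icc.1 (hπ.1 j)).1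

lemma isPF (hπ : IsPPF n π) : IsPF n π := by
  refine ⟨hπ.1, fun i hi => ?_⟩
  obtain ⟨hi1, hin⟩ := mem_Icc.1 hi
  rcases lt_or_eq_of_le hin with hlt | rfl
  · exact (hπ.2 i (mem_Icc.2 ⟨hi1, by omega⟩)).le
  · rw [filter_true_of_mem fun j _ => (mem_Icc.1 (hπ.1 j)).2, card_univ, Fintype.card_fin]

lemma eq_one_or_lt (hπ : IsPPF n π) (j : Fin n) : π j = 1 ∨ π j < n := by
  obtain ⟨hj1, hjn⟩ := mem_Icc.1 (hπ.1 j)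
  by_cases hn : n ≤ 1
  · omega
  -- `n - 1 < #{π ≤ n - 1} ≤ n` forces every value to be at most `n - 1`
  have hcard := hπ.2 (n - 1) (mem_Icc.2 ⟨by omega, le_rfl⟩)
  have hall : (univ.filter fun j => π j ≤ n - 1).card = (univ : Finset (Fin n)).card := by
    have := card_filter_le (univ : Finset (Fin n)) fun j => π j ≤ n - 1
    rw [card_univ, Fintype.card_fin] at this ⊢
    omega
  have := card_filter_eq_iff.1 hall j (mem_univ j)
  omega

end IsPPF

lemma card_filter_shiftUp_le_succ {n : ℕ} (π : Fin n → ℕ) {i : ℕ} (hi : 1 ≤ i) :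
    (univ.filter fun j => shiftUp (π j) ≤ i + 1).card = (univ.filter fun j => π j ≤ i).card := by
  simp only [shiftUp_le_succ_iff hi]

lemma card_filter_shiftUp_le_one {n : ℕ} (π : Fin n → ℕ) :
    (univ.filter fun j => shiftUp (π j) ≤ 1).card = (univ.filter fun j => π j ≤ 1).card := by
  simp only [shiftUp_le_one_iff]

theorem isPF_shiftUp_comp_iff {n : ℕ} {π : Fin n → ℕ} (hπ : ∀ j, 1 ≤ π j) :
    IsPF n (shiftUp ∘ π) ↔ IsPPF n π := by
  constructor
  · rintro ⟨hbound, hcount⟩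
    refine ⟨fun j => ?_, fun i hi => ?_⟩
    · have := shiftUp_mem_Icc_iff.1 (hbound j)
      exact mem_Icc.2 ⟨hπ j, by omega⟩
    · obtain ⟨hi1, hin⟩ := mem_Icc.1 hi
      have := hcount (i + 1) (mem_Icc.2 ⟨by omega, by omega⟩)
      rw [Function.comp_def, card_filter_shiftUp_le_succ π hi1] at this
      omega
  · intro hppf
    refine ⟨fun j => shiftUp_mem_Icc_iff.2 ⟨j.pos, hppf.eq_one_or_lt j⟩, fun i hi => ?_⟩
    obtain ⟨hi1, hin⟩ := mem_Icc.1 hi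
    rw [Function.comp_def]
    rcases eq_or_lt_of_le hi1 with rfl | hi2
    · rw [card_filter_shiftUp_le_one]
      exact hppf.isPF.2 1 hi
    · obtain ⟨k, rfl⟩ : ∃ k, i = k + 1 := ⟨i - 1, by omega⟩
      rw [card_filter_shiftUp_le_succ π (by omega)]
      exact hppf.2 k (mem_Icc.2 ⟨by omega, by omega⟩)

lemma shiftUp_mem_of_mem {S : Finset ℕ} {n x : ℕ} (hxS : x ∈ S) (hx : 1 ≤ x)
    (hxn : x = 1 ∨ x < n) :
    shiftUp x ∈ insert 1 ((S.filter fun i => 1 < i ∧ i < n).image (· + 1)) := by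
  unfold shiftUp
  split_ifs with hx1
  · exact mem_insert_self _ _
  · exact mem_insert_of_mem (mem_image_of_mem _ (mem_filter.2 ⟨hxS, by omega, by omega⟩))

lemma exists_shiftUp_eq_of_mem {S : Finset ℕ} {n t : ℕ} (h1 : 1 ∈ S)
    (ht : t ∈ insert 1 ((S.filter fun i => 1 < i ∧ i < n).image (· + 1))) :
    ∃ x ∈ S, 1 ≤ x ∧ shiftUp x = t := by
  rcases mem_insert.1 ht with rfl | ht
  · exact ⟨1, h1, le_rfl, rfl⟩
  · obtain ⟨x, hx, rfl⟩ := mem_image.1 ht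
    obtain ⟨hxS, hx1, -⟩ := mem_filter.1 hx
    exact ⟨x, hxS, hx1.le, if_neg hx1.ne'⟩

theorem restricted_prime_equiv_restricted_general (n : ℕ)
    (S : Finset ℕ) (h1 : 1 ∈ S)
    (T : Finset ℕ)
    (hT : T = insert 1 ((S.filter (fun i => 1 < i ∧ i < n)).image (· + 1)))
    (f : ℕ → ℕ) (hf : ∀ x, f x = if x = 1 then 1 else x + 1) :
    Set.BijOn (fun π => f ∘ π)
      {π : Fin n → ℕ | IsPPF n π ∧ ∀ j, π j ∈ S}
      {π : Fin n → ℕ | IsPF n π ∧ ∀ j, π j ∈ T} ∧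
    {π : Fin n → ℕ | IsPPF n π ∧ ∀ j, π j ∈ S}.ncard =
      {π : Fin n → ℕ | IsPF n π ∧ ∀ j, π j ∈ T}.ncard := by
  obtain rfl : f = shiftUp := funext hf
  have hbij : Set.BijOn (fun π => shiftUp ∘ π) {π : Fin n → ℕ | IsPPF n π ∧ ∀ j, π j ∈ S}
      {σ | IsPF n σ ∧ ∀ j, σ j ∈ T} := by
    refine ⟨?mapsTo, injOn_shiftUp_comp.mono fun π hπ => hπ.1.one_le, ?surjOn⟩
    case mapsTo =>
      rintro π ⟨hπ, hπS⟩
      exact ⟨(isPF_shiftUp_comp_iff hπ.one_le).2 hπ,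
        fun j => hT ▸ shiftUp_mem_of_mem (hπS j) (hπ.one_le j) (hπ.eq_one_or_lt j)⟩
    case surjOn =>
      rintro σ ⟨hσ, hσT⟩
      choose π hπS hπ1 hπσ using fun j => exists_shiftUp_eq_of_mem h1 (hT ▸ hσT j)
      obtain rfl : shiftUp ∘ π = σ := funext hπσ
      exact ⟨π, ⟨(isPF_shiftUp_comp_iff hπ1).1 hσ, hπS⟩, rfl⟩
  exact ⟨hbij, hbij.ncard_eq⟩

theorem restricted_prime_equiv_restricted (n : ℕ) (hn : 0 < n)
    (S : Finset ℕ) (hS : S ⊆ Finset.Icc 1 n) (h1 : 1 ∈ S)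
    (T : Finset ℕ)
    (hT : T = insert 1 ((S.filter (fun i => 1 < i ∧ i < n)).image (· + 1)))
    (f : ℕ → ℕ) (hf : ∀ x, f x = if x = 1 then 1 else x + 1) :
    Set.BijOn (fun π => f ∘ π)
      {π : Fin n → ℕ | IsPPF n π ∧ ∀ j, π j ∈ S}
      {π : Fin n → ℕ | IsPF n π ∧ ∀ j, π j ∈ T} ∧
    {π : Fin n → ℕ | IsPPF n π ∧ ∀ j, π j ∈ S}.ncard =
      {π : Fin n → ℕ | IsPF n π ∧ ∀ j, π j ∈ T}.ncard :=
  restricted_prime_equiv_restricted_general n S h1 T hT f hf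
end

section
/- For 1 ≤ s ≤ n, the number of [s]-restricted parking functions on n cars equals s^n − Σ_{i=0}^{s−1} C(n,i)·(i+1)^{i−1}·(s−i−1)^{n−i}. -/
/-!
Sort the functions `f : [n] → [s]` that are not `[s]`-restricted parking functions by the least
`k` with `#f⁻¹[k+1] ≤ k`. Then exactly `k` cars, forming a set `A`, prefer spots `≤ k`, their
preferences form an ordinary parking function on `A`, and the other `n - k` cars prefer spots in
`[k+2, s]`. Hence `s^n = #RPF + ∑_{k<s} C(n,k) p_k (s-k-1)^(n-k)`, where `p_k` is the number of
parking functions of length `k`. For `s = n` this recursion determines `p_n`, and Abel's identity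
`x^n = ∑_j C(n,j) (j+1)^(j-1) (x-j-1)^(n-j)` at `x = n` shows that `p_n = (n+1)^(n-1)`.
-/

/-- An `[s]`-restricted parking function on `n` cars. -/
def IsRPF (n s : ℕ) (π : Fin n → ℕ) : Prop :=
  (∀ j, π j ∈ Finset.Icc 1 s) ∧
  ∀ i ∈ Finset.Icc 1 n, i ≤ (Finset.univ.filter (fun j => π j ≤ i)).card

open Finset

section Abel

open Polynomial

theorem sum_choose_mul_pow_neg_eq_zero {m : ℕ} (hm : 0 < m) :
    ∑ j ∈ range (m + 1),
      (m.choose j : ℤ) * ((j : ℤ) + 1) ^ (j - 1) * (-((j : ℤ) + 1)) ^ (m - j) = 0 := by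
  have h := congrFun (fwdDiff_iter_pow_eq_zero_of_lt (R := ℤ) (Nat.sub_lt hm one_pos)) 1
  rw [fwdDiff_iter_eq_sum_shift, Pi.zero_apply] at h
  rw [← h]
  refine Finset.sum_congr rfl fun j hj => ?_
  rw [neg_pow, smul_eq_mul, nsmul_one, add_comm 1]
  rcases Nat.eq_zero_or_pos j with rfl | hj0
  · simp
  · have hjm := mem_range.mp hj
    rw [show m - 1 = (j - 1) + (m - j) by omega, pow_add]
    ring

theorem Polynomial.eq_of_derivative_eq_of_eval_zero_eq {R : Type*} [Ring R] [IsAddTorsionFree R]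
    {p q : R[X]} (hd : derivative p = derivative q) (h0 : p.eval 0 = q.eval 0) : p = q := by
  have hC := eq_C_of_derivative_eq_zero (p := p - q) (by rw [derivative_sub, hd, sub_self])
  rw [coeff_zero_eq_eval_zero, eval_sub, h0, sub_self, map_zero] at hC
  exact sub_eq_zero.mp hC

/-- A special case of Abel's binomial identity. -/
theorem sum_choose_mul_pow_X_sub_eq_X_pow (n : ℕ) :
    ∑ j ∈ range (n + 1),
      C ((n.choose j : ℤ) * ((j : ℤ) + 1) ^ (j - 1)) * (X - C ((j : ℤ) + 1)) ^ (n - j) =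
      X ^ n := by
  induction n with
  | zero => simp
  | succ n ih =>
    refine eq_of_derivative_eq_of_eval_zero_eq ?_ ?_
    · rw [derivative_sum, sum_range_succ, Nat.sub_self, pow_zero, mul_one, derivative_C, add_zero,
        derivative_X_pow, Nat.add_sub_cancel, ← ih, mul_sum]
      refine Finset.sum_congr rfl fun j hj => ?_
      have hjn := mem_range.mp hj
      rw [derivative_C_mul, derivative_X_sub_C_pow, show n + 1 - j - 1 = n - j by omega,
        ← mul_assoc, ← mul_assoc, ← C_mul, ← C_mul]
      congr 2
      have := congrArg (Nat.cast : ℕ → ℤ) (Nat.choose_mul_succ_eq n j)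
      push_cast at this ⊢
      linear_combination (-((j : ℤ) + 1) ^ (j - 1)) * this
    · simpa [eval_finsetSum] using sum_choose_mul_pow_neg_eq_zero n.succ_pos

theorem pow_self_eq_sum_add_succ_pow (n : ℕ) :
    n ^ n = ∑ j ∈ range n, n.choose j * (j + 1) ^ (j - 1) * (n - j - 1) ^ (n - j) +
      (n + 1) ^ (n - 1) := by
  have h := congrArg (eval (n : ℤ)) (sum_choose_mul_pow_X_sub_eq_X_pow n)
  simp only [eval_finsetSum, eval_mul, eval_C, eval_pow, eval_sub, eval_X] at h
  rw [sum_range_succ] at h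
  zify
  rw [← h, Nat.sub_self, pow_zero, mul_one, Nat.choose_self, Nat.cast_one, one_mul]
  congr 1
  refine Finset.sum_congr rfl fun j hj => ?_
  rw [Nat.cast_sub (by have := mem_range.mp hj; omega), Nat.cast_sub (mem_range.mp hj).le]
  ring

end Abel

open Fintype

theorem Finset.card_filter_piFinset_restrict {ι β : Type*} [Fintype ι] [DecidableEq ι]
    (u : ι → Finset β) (A : Finset ι) (P : (A → β) → Prop) [DecidablePred P] :
    #{f ∈ piFinset u | P (A.restrict f)} =
      #{g ∈ piFinset fun a : A => u a | P g} * ∏ j ∈ Aᶜ, #(u j) := by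
  classical
  rw [card_eq_sum_card_fiberwise (f := A.restrict) (t := {g ∈ piFinset fun a : A => u a | P g})
    fun f hf => by simp_all [restrict]]
  rw [← smul_eq_mul, ← sum_const]
  refine sum_congr rfl fun g hg => ?_
  simp only [mem_filter, mem_piFinset] at hg
  have hfiber : {f ∈ {f ∈ piFinset u | P (A.restrict f)} | A.restrict f = g} =
      piFinset fun j => if h : j ∈ A then {g ⟨j, h⟩} else u j := by
    ext f
    simp only [mem_filter, mem_piFinset]
    constructor
    · rintro ⟨⟨hu, -⟩, rfl⟩ j
      split_ifs <;> simp [hu j]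
    · intro hf
      have hrestrict : A.restrict f = g := funext fun a => by simpa [a.2] using hf a
      refine ⟨⟨fun j => ?_, hrestrict ▸ hg.2⟩, hrestrict⟩
      by_cases hj : j ∈ A
      · simpa [← hrestrict] using hg.1 ⟨j, hj⟩
      · simpa [hj] using hf j
  rw [hfiber, card_piFinset, ← prod_mul_prod_compl A, prod_eq_one fun j hj => by simp [hj],
    one_mul]
  exact prod_congr rfl fun j hj => by simp [mem_compl.mp hj]

theorem Finset.card_eq_card_filter_add_sum_card_filter_and_not {α : Type*} (F : Finset α)
    (P : ℕ → α → Prop) [∀ i, DecidablePred (P i)] (h0 : ∀ x, P 0 x)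
    (hP : ∀ i x, P (i + 1) x → P i x) (k : ℕ) :
    #F = #{x ∈ F | P k x} + ∑ i ∈ range k, #{x ∈ F | P i x ∧ ¬P (i + 1) x} := by
  induction k with
  | zero => simp [filter_true_of_mem fun x _ => h0 x]
  | succ k ih =>
    rw [ih, sum_range_succ, ← add_assoc, add_right_comm,
      ← card_filter_add_card_filter_not (s := {x ∈ F | P k x}) (P (k + 1)), filter_filter,
      filter_filter, filter_congr fun x _ => and_iff_right_of_imp (hP k x)]

section ParkingFunctions

variable {ι : Type*} [Fintype ι]

def IsParking (s : ℕ) (f : ι → ℕ) : Prop := ∀ i ∈ Icc 1 s, i ≤ #{j | f j ≤ i}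

instance (s : ℕ) : DecidablePred (IsParking (ι := ι) s) :=
  fun _ => inferInstanceAs (Decidable (∀ i ∈ Icc 1 s, _))

variable (ι) in
def restrictedParkingFunctions [DecidableEq ι] (s : ℕ) : Finset (ι → ℕ) :=
  {f ∈ piFinset fun _ => Icc 1 s | IsParking s f}

namespace IsParking

variable {f : ι → ℕ} {k : ℕ}

theorem zero (f : ι → ℕ) : IsParking 0 f := by simp [IsParking]

theorem succ_iff : IsParking (k + 1) f ↔ IsParking k f ∧ k + 1 ≤ #{j | f j ≤ k + 1} := by
  simp only [IsParking, mem_Icc]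
  constructor
  · exact fun h => ⟨fun i hi => h i ⟨hi.1, by omega⟩, h (k + 1) ⟨by omega, le_rfl⟩⟩
  · rintro ⟨h, hk⟩ i hi
    rcases Nat.lt_or_ge i (k + 1) with hik | hik
    · exact h i ⟨hi.1, by omega⟩
    · rwa [show i = k + 1 by omega]

theorem of_succ (hf : IsParking (k + 1) f) : IsParking k f := (succ_iff.mp hf).1

theorem le_card (hf : IsParking k f) : k ≤ #{j | f j ≤ k} := by
  rcases Nat.eq_zero_or_pos k with rfl | hk
  · exact Nat.zero_le _
  · exact hf k (mem_Icc.mpr ⟨hk, le_rfl⟩)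

theorem restrict_iff (A : Finset ι) (hA : ∀ j ∉ A, k < f j) :
    IsParking k (A.restrict f) ↔ IsParking k f := by
  classical
  have hcard : ∀ i ≤ k, #{a : A | f a ≤ i} = #{j | f j ≤ i} := fun i hi => by
    rw [univ_eq_attach, filter_attach (fun j => f j ≤ i), card_map, card_attach]
    congr 1
    ext j
    simp only [mem_filter, mem_univ, true_and, and_iff_right_iff_imp]
    exact fun hj => by_contra fun hjA => absurd (hA j hjA) (by omega)
  exact forall₂_congr fun i hi => by rw [← hcard i (mem_Icc.mp hi).2]; rfl

theorem card_filter_le_succ_le (hf : IsParking k f) (hk : ¬IsParking (k + 1) f) :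
    #{j | f j ≤ k + 1} ≤ k :=
  Nat.le_of_lt_succ <| not_le.mp fun h => hk (succ_iff.mpr ⟨hf, h⟩)

theorem card_filter_le_eq (hf : IsParking k f) (hk : ¬IsParking (k + 1) f) :
    #{j | f j ≤ k} = k :=
  le_antisymm ((card_le_card <| monotone_filter_right _ fun j _ hj => by omega).trans
    (hf.card_filter_le_succ_le hk)) hf.le_card

theorem filter_le_succ_eq (hf : IsParking k f) (hk : ¬IsParking (k + 1) f) :
    ({j | f j ≤ k + 1} : Finset ι) = ({j | f j ≤ k} : Finset ι) :=
  (eq_of_subset_of_card_le (monotone_filter_right _ fun j _ hj => by omega)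
    (by rw [hf.card_filter_le_eq hk]; exact hf.card_filter_le_succ_le hk)).symm

end IsParking

variable [DecidableEq ι] {f : ι → ℕ} {s k : ℕ}

theorem isParking_not_succ_fiber_iff (hks : k < s) {A : Finset ι} (hA : #A = k) :
    (f ∈ piFinset (fun _ => Icc 1 s) ∧ IsParking k f ∧ ¬IsParking (k + 1) f) ∧
        ({j | f j ≤ k} : Finset ι) = A ↔
      f ∈ piFinset (fun j => if j ∈ A then Icc 1 k else Icc (k + 2) s) ∧
        IsParking k (A.restrict f) := by
  simp only [mem_piFinset]
  constructor
  · rintro ⟨⟨hrange, hf, hk⟩, rfl⟩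
    have hsucc := hf.filter_le_succ_eq hk
    refine ⟨fun j => ?_, (IsParking.restrict_iff _ fun j hj => by simpa using hj).mpr hf⟩
    have hj := mem_Icc.mp (hrange j)
    have hj' : f j ≤ k + 1 → f j ≤ k := fun h => by
      simpa using hsucc.subset (mem_filter.mpr ⟨mem_univ j, h⟩)
    split_ifs with hjA <;> simp only [mem_filter, mem_univ, true_and] at hjA <;> rw [mem_Icc] <;>
      omega
  · rintro ⟨hrange, hf⟩
    have hin : ∀ j ∈ A, 1 ≤ f j ∧ f j ≤ k := fun j hjA => by
      simpa [hjA] using hrange j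
    have hout : ∀ j ∉ A, k + 2 ≤ f j ∧ f j ≤ s := fun j hjA => by
      simpa [hjA] using hrange j
    have hlow : ∀ i, k ≤ i → i ≤ k + 1 → ({j | f j ≤ i} : Finset ι) = A := fun i _ _ => by
      ext j
      simp only [mem_filter, mem_univ, true_and]
      by_cases hjA : j ∈ A
      · simp only [hjA, iff_true]; have := hin j hjA; omega
      · simp only [hjA, iff_false]; have := hout j hjA; omega
    refine ⟨⟨fun j => ?_, (IsParking.restrict_iff A fun j hj => ?_).mp hf, ?_⟩,
      hlow k le_rfl (by omega)⟩
    · rw [mem_Icc]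
      by_cases hjA : j ∈ A
      · have := hin j hjA; omega
      · have := hout j hjA; omega
    · have := hout j hj; omega
    · rw [IsParking.succ_iff, hlow (k + 1) (by omega) le_rfl, hA]
      exact fun h => absurd h.2 (by omega)

theorem card_filter_isParking_not_succ (hks : k < s) :
    #{f ∈ piFinset (fun _ : ι => Icc 1 s) | IsParking k f ∧ ¬IsParking (k + 1) f} =
      ∑ A ∈ powersetCard k (univ : Finset ι),
        #(restrictedParkingFunctions A k) * (s - k - 1) ^ (Fintype.card ι - k) := by
  rw [card_eq_sum_card_fiberwise (f := fun f => ({j | f j ≤ k} : Finset ι))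
    (t := powersetCard k univ) fun f hf => by
      simp only [coe_filter, Set.mem_ofPred_eq] at hf
      simpa using hf.2.1.card_filter_le_eq hf.2.2]
  refine sum_congr rfl fun A hA => ?_
  have hAk := (mem_powersetCard.mp hA).2
  have hfiber : {f ∈ {f ∈ piFinset (fun _ : ι => Icc 1 s) |
        IsParking k f ∧ ¬IsParking (k + 1) f} | ({j | f j ≤ k} : Finset ι) = A} =
      {f ∈ piFinset (fun j => if j ∈ A then Icc 1 k else Icc (k + 2) s) |
        IsParking k (A.restrict f)} := by
    ext f
    simpa only [mem_filter] using isParking_not_succ_fiber_iff hks hAk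
  rw [hfiber, card_filter_piFinset_restrict, restrictedParkingFunctions,
    Finset.prod_congr rfl fun j hj => by rw [if_neg (mem_compl.mp hj)]]
  simp only [coe_mem, if_true, prod_const, Nat.card_Icc, card_compl, hAk]
  congr 2
  omega

theorem pow_card_eq_card_restrictedParkingFunctions_add_sum :
    s ^ card ι = #(restrictedParkingFunctions ι s) +
      ∑ k ∈ range s, ∑ A ∈ powersetCard k (univ : Finset ι),
        #(restrictedParkingFunctions A k) * (s - k - 1) ^ (card ι - k) := by
  have h := card_eq_card_filter_add_sum_card_filter_and_not (piFinset fun _ : ι => Icc 1 s)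
    IsParking IsParking.zero (fun _ _ => IsParking.of_succ) s
  rw [card_piFinset, prod_const, Nat.card_Icc, add_tsub_cancel_right, card_univ] at h
  rw [h, restrictedParkingFunctions]
  exact congrArg _ <| Finset.sum_congr rfl fun k hk =>
    card_filter_isParking_not_succ (mem_range.mp hk)

theorem pow_card_eq_add_sum_choose_of_card_restrictedParkingFunctions
    (hpf : ∀ k < s, ∀ A : Finset ι, #A = k →
      #(restrictedParkingFunctions A k) = (k + 1) ^ (k - 1)) :
    s ^ card ι = #(restrictedParkingFunctions ι s) +
      ∑ k ∈ range s, (card ι).choose k * (k + 1) ^ (k - 1) * (s - k - 1) ^ (card ι - k) := by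
  rw [pow_card_eq_card_restrictedParkingFunctions_add_sum]
  refine congrArg _ (Finset.sum_congr rfl fun k hk => ?_)
  rw [Finset.sum_congr rfl fun A hA => by
      rw [hpf k (mem_range.mp hk) A (mem_powersetCard.mp hA).2],
    sum_const, card_powersetCard, card_univ, smul_eq_mul, mul_assoc]

theorem card_restrictedParkingFunctions_of_card_eq {n : ℕ} (hn : card ι = n) :
    #(restrictedParkingFunctions ι n) = (n + 1) ^ (n - 1) := by
  induction n using Nat.strong_induction_on generalizing ι with
  | _ n ih =>
    have hdecomp := pow_card_eq_add_sum_choose_of_card_restrictedParkingFunctions (ι := ι)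
      (s := n) fun k hk A hA => ih k hk ((card_coe A).trans hA)
    rw [hn] at hdecomp
    have habel := pow_self_eq_sum_add_succ_pow n
    omega

end ParkingFunctions

theorem isRPF_iff_mem_restrictedParkingFunctions {n s : ℕ} (hsn : s ≤ n) (π : Fin n → ℕ) :
    IsRPF n s π ↔ π ∈ restrictedParkingFunctions (Fin n) s := by
  rw [restrictedParkingFunctions, mem_filter, mem_piFinset]
  unfold IsRPF IsParking
  refine and_congr_right fun hπ => ⟨fun h i hi => h i ?_, fun h i hi => ?_⟩
  · exact mem_Icc.mpr ⟨(mem_Icc.mp hi).1, (mem_Icc.mp hi).2.trans hsn⟩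
  · by_cases his : i ≤ s
    · exact h i (mem_Icc.mpr ⟨(mem_Icc.mp hi).1, his⟩)
    · rw [filter_true_of_mem fun j _ => (mem_Icc.mp (hπ j)).2.trans (by omega),
        Finset.card_fin]
      exact (mem_Icc.mp hi).2

theorem count_restricted_pf_complement_general (n s : ℕ) (h2 : s ≤ n) :
    ({π : Fin n → ℕ | IsRPF n s π}.ncard : ℤ) =
      (s : ℤ) ^ n -
        ∑ i ∈ Finset.range s,
          (n.choose i : ℤ) * ((i : ℤ) + 1) ^ (i - 1) * ((s : ℤ) - i - 1) ^ (n - i) := by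
  have hset : {π : Fin n → ℕ | IsRPF n s π} = ↑(restrictedParkingFunctions (Fin n) s) :=
    Set.ext (isRPF_iff_mem_restrictedParkingFunctions h2)
  have hdecomp := pow_card_eq_add_sum_choose_of_card_restrictedParkingFunctions (ι := Fin n)
    (s := s) fun k _ A hA => card_restrictedParkingFunctions_of_card_eq ((card_coe A).trans hA)
  rw [Fintype.card_fin] at hdecomp
  replace hdecomp := congrArg (Nat.cast : ℕ → ℤ) hdecomp
  push_cast at hdecomp
  rw [hset, Set.ncard_coe_finset, eq_sub_iff_add_eq, hdecomp]
  congr 1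
  refine Finset.sum_congr rfl fun i hi => ?_
  rw [Nat.cast_sub (by have := mem_range.mp hi; omega), Nat.cast_sub (mem_range.mp hi).le,
    Nat.cast_one]

theorem count_restricted_pf_complement (n s : ℕ) (h1 : 1 ≤ s) (h2 : s ≤ n) :
    ({π : Fin n → ℕ | IsRPF n s π}.ncard : ℤ) =
      (s : ℤ) ^ n -
        ∑ i ∈ Finset.range s,
          (n.choose i : ℤ) * ((i : ℤ) + 1) ^ (i - 1) * ((s : ℤ) - i - 1) ^ (n - i) :=
  count_restricted_pf_complement_general n s h2
end

section
/- For 1 ≤ s < n, the number of [s]-restricted prime parking functions on n cars equals Σ_{i=s+1}^{n} C(n,i)·(i−1)^{i−1}·(s−i)^{n−i}. -/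
/-!
Split the cars according to whether their preference is at most `s`. An `[s+1]`-restricted prime
parking function on `n` cars is then the same as a set `S` of more than `s` cars carrying an
`[s]`-restricted prime parking function, with all other cars preferring `s + 1`; the prime
condition at `i = s` is exactly `s < #S`. Hence `N(n, s+1) = ∑_{m > s} C(n, m) N(m, s)`, while
`N(n, 1) = 1`. The closed form obeys the same recursion by a binomial convolution (its extra
term `i = s + 1` vanishes), and equals `1` at `s = 1` because the `n`-th finite difference of
`(x - 1)^(n-1)` is zero.
-/

def IsRPPF (n s : ℕ) (π : Fin n → ℕ) : Prop :=
  (∀ j, π j ∈ Finset.Icc 1 s) ∧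
  ∀ i ∈ Finset.Icc 1 (n - 1), i < (Finset.univ.filter (fun j => π j ≤ i)).card

open Finset

section

variable {ι κ : Type*} [Fintype ι] [Fintype κ]

def IsRestrictedPPF (s : ℕ) (π : ι → ℕ) : Prop :=
  (∀ j, π j ∈ Icc 1 s) ∧ ∀ i ∈ Icc 1 (Fintype.card ι - 1), i < #{j | π j ≤ i}

instance (s : ℕ) : DecidablePred (IsRestrictedPPF (ι := ι) s) := fun _ => by
  unfold IsRestrictedPPF; infer_instance

theorem isRestrictedPPF_comp_equiv {s : ℕ} (e : κ ≃ ι) (π : ι → ℕ) :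
    IsRestrictedPPF s (π ∘ e) ↔ IsRestrictedPPF s π := by
  have hcount : ∀ i, #{k | π (e k) ≤ i} = #{j | π j ≤ i} := fun i =>
    card_equiv e (by simp)
  simp only [IsRestrictedPPF, Function.comp_apply, hcount, Fintype.card_congr e,
    e.forall_congr_left, e.apply_symm_apply]

omit [Fintype ι] in
theorem card_filter_univ_coe (S : Finset ι) (p : ι → Prop) [DecidablePred p] :
    #{j : S | p j} = #{j ∈ S | p j} := by
  rw [univ_eq_attach, filter_attach, card_map, card_attach]

theorem card_filter_coe_le_eq_card_filter_le {s i : ℕ} {S : Finset ι} {π : ι → ℕ}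
    (hmem : ∀ j, j ∈ S ↔ π j ≤ s) (hi : i ≤ s) :
    #{j : S | π j ≤ i} = #{j | π j ≤ i} := by
  rw [card_filter_univ_coe S fun j => π j ≤ i]
  congr 1
  ext j
  simp only [mem_filter, mem_univ, true_and, and_iff_right_iff_imp, hmem]
  omega

variable [DecidableEq ι] [DecidableEq κ]

variable (ι) in
def restrictedPPFs (s : ℕ) : Finset (ι → ℕ) :=
  {π ∈ Fintype.piFinset fun _ => Icc 1 s | IsRestrictedPPF s π}

theorem mem_restrictedPPFs {s : ℕ} {π : ι → ℕ} :
    π ∈ restrictedPPFs ι s ↔ IsRestrictedPPF s π := by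
  rw [restrictedPPFs, mem_filter, Fintype.mem_piFinset, and_iff_right_of_imp fun h => h.1]

theorem card_restrictedPPFs_congr (s : ℕ) (e : κ ≃ ι) :
    #(restrictedPPFs κ s) = #(restrictedPPFs ι s) :=
  card_equiv (e.arrowCongr (Equiv.refl ℕ)) fun ρ => by
    rw [mem_restrictedPPFs, mem_restrictedPPFs, ← isRestrictedPPF_comp_equiv e]
    simp [Function.comp_def]

theorem restrictedPPFs_one : restrictedPPFs ι 1 = {fun _ => 1} := by
  ext π
  simp only [mem_restrictedPPFs, IsRestrictedPPF, mem_Icc, mem_singleton, funext_iff]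
  constructor
  · exact fun h j => le_antisymm (h.1 j).2 (h.1 j).1
  · intro h
    refine ⟨fun j => by simp [h j], fun i hi => ?_⟩
    rw [filter_true_of_mem fun j _ => (h j).trans_le hi.1, card_univ]
    omega

theorem isRestrictedPPF_succ_and_filter_eq_iff {s : ℕ} {S : Finset ι} (hS : s < #S)
    {π : ι → ℕ} :
    IsRestrictedPPF (s + 1) π ∧ ({j | π j ≤ s} : Finset ι) = S ↔
      (∀ j ∉ S, π j = s + 1) ∧ IsRestrictedPPF s fun j : S => π j := by
  have hcard : #S ≤ Fintype.card ι := card_le_univ S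
  simp only [IsRestrictedPPF, Fintype.card_coe, mem_Icc]
  constructor
  · rintro ⟨⟨hval, hprime⟩, hS'⟩
    have hmem : ∀ j, j ∈ S ↔ π j ≤ s := fun j => by simp [← hS']
    refine ⟨fun j hj => by have := hval j; have := (hmem j).not.1 hj; omega,
      fun j => ⟨(hval j).1, (hmem j).1 j.2⟩, fun i hi => ?_⟩
    rcases lt_or_ge i s with his | hsi
    · rw [card_filter_coe_le_eq_card_filter_le hmem his.le]
      exact hprime i ⟨hi.1, by omega⟩
    · rw [filter_true_of_mem fun (j : S) _ => ((hmem j).1 j.2).trans hsi, card_univ,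
        Fintype.card_coe]
      omega
  · rintro ⟨hout, hval, hprime⟩
    have hmem : ∀ j, j ∈ S ↔ π j ≤ s := fun j => by
      by_cases hj : j ∈ S
      · simp only [hj, true_iff]; exact (hval ⟨j, hj⟩).2
      · simp [hj, hout j hj]
    have hS' : ({j | π j ≤ s} : Finset ι) = S := by ext j; simp [hmem]
    refine ⟨⟨fun j => ?_, fun i hi => ?_⟩, hS'⟩
    · by_cases hj : j ∈ S
      · have : 1 ≤ π j ∧ π j ≤ s := hval ⟨j, hj⟩; omega
      · simp [hout j hj]
    · rcases lt_trichotomy i s with his | rfl | hsi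
      · rw [← card_filter_coe_le_eq_card_filter_le hmem his.le]
        exact hprime i ⟨hi.1, by omega⟩
      · rwa [hS']
      · rw [filter_true_of_mem fun j _ => ?_, card_univ]
        · omega
        · by_cases hj : j ∈ S
          · have := (hmem j).1 hj; omega
          · rw [hout j hj]; omega

theorem card_filter_restrictedPPFs_succ {s : ℕ} {S : Finset ι} (hS : s < #S) :
    #{π ∈ restrictedPPFs ι (s + 1) | ({j | π j ≤ s} : Finset ι) = S} =
      #(restrictedPPFs S s) := by
  refine card_nbij' (fun π j => π j) (fun ρ j => if h : j ∈ S then ρ ⟨j, h⟩ else s + 1)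
    (fun π hπ => ?_) (fun ρ hρ => ?_) (fun π hπ => ?_) (fun ρ _ => by simp)
  · rw [mem_coe, mem_filter, mem_restrictedPPFs, isRestrictedPPF_succ_and_filter_eq_iff hS] at hπ
    exact mem_restrictedPPFs.2 hπ.2
  · rw [mem_coe, mem_filter, mem_restrictedPPFs, isRestrictedPPF_succ_and_filter_eq_iff hS]
    exact ⟨fun j hj => dif_neg hj, by simpa using mem_restrictedPPFs.1 hρ⟩
  · rw [mem_coe, mem_filter, mem_restrictedPPFs, isRestrictedPPF_succ_and_filter_eq_iff hS] at hπ
    funext j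
    by_cases hj : j ∈ S
    · simp [hj]
    · simp [hj, hπ.1 j hj]

theorem card_restrictedPPFs_succ {s : ℕ} (hs : 1 ≤ s) (hsι : s < Fintype.card ι) :
    #(restrictedPPFs ι (s + 1)) = ∑ m ∈ Icc (s + 1) (Fintype.card ι),
      (Fintype.card ι).choose m * #(restrictedPPFs (Fin m) s) := by
  have hfiber : ∀ S : Finset ι,
      #{π ∈ restrictedPPFs ι (s + 1) | ({j | π j ≤ s} : Finset ι) = S} =
        if s < #S then #(restrictedPPFs (Fin #S) s) else 0 := fun S => by
    split_ifs with hS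
    · rw [card_filter_restrictedPPFs_succ hS, card_restrictedPPFs_congr s S.equivFin.symm]
    · refine card_eq_zero.2 (filter_eq_empty_iff.2 fun π hπ hπS => hS ?_)
      rw [← hπS]
      exact (mem_restrictedPPFs.1 hπ).2 s (mem_Icc.2 ⟨hs, by omega⟩)
  rw [card_eq_sum_card_fiberwise (f := fun π => ({j | π j ≤ s} : Finset ι)) (t := univ)
      (by simp),
    sum_congr rfl fun S _ => hfiber S, ← powerset_univ,
    sum_powerset_apply_card fun m => if s < m then #(restrictedPPFs (Fin m) s) else 0, card_univ]
  simp_rw [smul_ite, smul_zero, smul_eq_mul, ← sum_filter]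
  congr 1
  ext m
  simp only [mem_filter, mem_range, mem_Icc]
  omega

end

theorem sum_Icc_choose_mul_choose_mul_pow {R : Type*} [CommRing R] (i n : ℕ) (x : R) :
    ∑ m ∈ Icc i n, (n.choose m * m.choose i : R) * x ^ (m - i) =
      n.choose i * (x + 1) ^ (n - i) := by
  rcases lt_or_ge n i with hni | hin
  · simp [Icc_eq_empty_of_lt hni, Nat.choose_eq_zero_of_lt hni]
  rw [← Ico_add_one_right_eq_Icc, sum_Ico_eq_sum_range, add_pow, mul_sum,
    show n + 1 - i = n - i + 1 by omega]
  refine sum_congr rfl fun k _ => ?_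
  rw [← Nat.cast_mul, Nat.choose_mul (Nat.le_add_right i k)]
  simp only [add_tsub_cancel_left, one_pow, mul_one, Nat.cast_mul]
  ring

theorem sum_Icc_choose_mul_sum_Icc_choose {R : Type*} [CommRing R] (l n : ℕ) (f y : ℕ → R) :
    ∑ m ∈ Icc l n, (n.choose m : R) * ∑ i ∈ Icc l m, m.choose i * f i * y i ^ (m - i) =
      ∑ i ∈ Icc l n, n.choose i * f i * (y i + 1) ^ (n - i) := by
  simp_rw [mul_sum]
  rw [sum_comm' (t' := Icc l n) (s' := fun i => Icc i n)
    (by intro m i; simp only [mem_Icc]; omega)]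
  refine sum_congr rfl fun i _ => ?_
  rw [mul_right_comm, ← sum_Icc_choose_mul_choose_mul_pow, sum_mul]
  exact sum_congr rfl fun m _ => by ring

theorem sum_neg_one_pow_mul_choose_mul_sub_one_pow {j n : ℕ} (h : j < n) :
    ∑ k ∈ range (n + 1), (-1 : ℤ) ^ (n - k) * n.choose k * ((k : ℤ) - 1) ^ j = 0 := by
  have := congr_fun (fwdDiff_iter_pow_eq_zero_of_lt (R := ℤ) h) (-1)
  rw [fwdDiff_iter_eq_sum_shift] at this
  simpa [neg_add_eq_sub] using this

def rppfSum (n s : ℕ) : ℤ :=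
  ∑ i ∈ Icc (s + 1) n,
    (n.choose i : ℤ) * ((i : ℤ) - 1) ^ (i - 1) * ((s : ℤ) - i) ^ (n - i)

theorem rppfSum_one {n : ℕ} (hn : 2 ≤ n) : rppfSum n 1 = 1 := by
  set F : ℕ → ℤ := fun k => (-1) ^ (n - k) * n.choose k * ((k : ℤ) - 1) ^ (n - 1)
  have hterm : ∀ i ∈ Icc 2 n,
      (n.choose i : ℤ) * ((i : ℤ) - 1) ^ (i - 1) * ((1 : ℕ) - (i : ℤ)) ^ (n - i) = F i := by
    intro i hi
    obtain ⟨hi2, hin⟩ := mem_Icc.mp hi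
    simp only [F]
    rw [Nat.cast_one, show (1 : ℤ) - i = -1 * (i - 1) by ring, mul_pow,
      show n - 1 = (i - 1) + (n - i) by omega, pow_add]
    ring
  have hF : ∑ k ∈ range 2, F k + ∑ k ∈ Ico 2 (n + 1), F k = 0 := by
    rw [sum_range_add_sum_Ico _ (by omega)]
    exact sum_neg_one_pow_mul_choose_mul_sub_one_pow (by omega)
  have hF01 : ∑ k ∈ range 2, F k = -1 := by
    simp [F, sum_range_succ, zero_pow (show n - 1 ≠ 0 by omega), ← pow_add,
      show n + (n - 1) = 2 * (n - 1) + 1 by omega, pow_succ, pow_mul]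
  rw [rppfSum, sum_congr rfl hterm, ← Ico_add_one_right_eq_Icc]
  linarith

theorem sum_choose_mul_rppfSum {n s : ℕ} (h : s + 1 < n) :
    ∑ m ∈ Icc (s + 1) n, (n.choose m : ℤ) * rppfSum m s = rppfSum n (s + 1) := by
  simp only [rppfSum]
  rw [sum_Icc_choose_mul_sum_Icc_choose, ← insert_Icc_add_one_left_eq_Icc h.le,
    sum_insert (by simp)]
  have hvanish : ((s : ℤ) - (s + 1 : ℕ) + 1) ^ (n - (s + 1)) = 0 := by
    rw [Nat.cast_succ, show (s : ℤ) - (s + 1) + 1 = 0 by ring, zero_pow (by omega)]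
  rw [hvanish, mul_zero, zero_add]
  refine sum_congr rfl fun i _ => ?_
  push_cast
  ring

theorem coe_restrictedPPFs_fin (n s : ℕ) :
    (restrictedPPFs (Fin n) s : Set (Fin n → ℕ)) = {π | IsRPPF n s π} := by
  ext π
  simp [mem_restrictedPPFs, IsRestrictedPPF, IsRPPF]

theorem card_restrictedPPFs_fin {n s : ℕ} (hs : 1 ≤ s) (hsn : s < n) :
    (#(restrictedPPFs (Fin n) s) : ℤ) = rppfSum n s := by
  induction s, hs using Nat.le_induction generalizing n with
  | base => rw [restrictedPPFs_one, card_singleton, rppfSum_one hsn, Nat.cast_one]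
  | succ s hs ih =>
    rw [card_restrictedPPFs_succ hs (by rw [Fintype.card_fin]; omega), Fintype.card_fin,
      ← sum_choose_mul_rppfSum hsn]
    push_cast
    exact sum_congr rfl fun m hm => by rw [ih (mem_Icc.1 hm).1]

theorem count_restricted_ppf_sum (n s : ℕ) (h1 : 1 ≤ s) (h2 : s < n) :
    ({π : Fin n → ℕ | IsRPPF n s π}.ncard : ℤ) =
      ∑ i ∈ Finset.Icc (s + 1) n,
        (n.choose i : ℤ) * ((i : ℤ) - 1) ^ (i - 1) * ((s : ℤ) - i) ^ (n - i) := by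
  rw [← coe_restrictedPPFs_fin, Set.ncard_coe_finset]
  exact card_restrictedPPFs_fin h1 h2
end

section
/- For 1 ≤ s ≤ n, the number-of-ones enumerator of [s]-restricted parking functions satisfies Σ_{π ∈ PF_{n|[s]}} x^{#π⁻¹({1})} = Σ_{i=s}^{n} C(n,i)·x·(x+i)^{i−1}·(s−i−1)^{n−i} as polynomials in x. -/
/-!
Deleting the cars that prefer the last spot turns an `[s+1]`-restricted parking function on `n`
cars, `m` of which prefer spot `s + 1`, into an `[s]`-restricted one on the other `n - m` cars,
and the only extra constraint is `s ≤ n - m`. So the enumerators satisfy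
`E(n, s+1) = ∑ₘ C(n,m) E(n-m, s)`. The right-hand side obeys the same recursion whatever the
polynomials `x (x+i)^(i-1)` are, by `C(n,m) C(n-m,i) = C(n,i) C(n-i,m)` and the binomial theorem.
For `s = 1` both sides are `x^n`: on the right this is Abel's identity at `y = 0`, whose
coefficients are `n`-th finite differences of polynomials of degree `n - 1`.
-/

open Finset Polynomial
open scoped Nat

theorem Polynomial.sum_range_alternating_choose_mul_eval_eq_zero {R : Type*} [CommRing R]
    {P : R[X]} {n : ℕ} (hP : P.natDegree < n) :
    ∑ k ∈ range (n + 1), (-1 : R) ^ (n - k) * n.choose k * P.eval (k : R) = 0 := by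
  have h := congrFun (fwdDiff_iter_eq_zero_of_degree_lt hP) 0
  rw [fwdDiff_iter_eq_sum_shift] at h
  simpa [zsmul_eq_mul] using h

theorem factorial_mul_choose_pred_mul_pow {n k : ℕ} (hk : k + 1 < n) (i : ℕ) :
    (k ! : ℤ) * ((i - 1).choose k * (i : ℤ) ^ (n - 1 - k)) =
      (descPochhammer ℤ (k + 1) * X ^ (n - 2 - k)).eval (i : ℤ) := by
  rw [eval_mul, eval_pow, eval_X, descPochhammer_eval_eq_descFactorial]
  rcases i with _ | j
  · simp [show n - 1 - k ≠ 0 by omega]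
  · rw [Nat.succ_descFactorial_succ, Nat.descFactorial_eq_factorial_mul_choose,
      show n - 1 - k = n - 2 - k + 1 by omega, pow_succ]
    push_cast
    ring

theorem sum_alternating_choose_mul_choose_pred_mul_pow (n k : ℕ) :
    ∑ i ∈ Icc 1 n, (-1 : ℤ) ^ (n - i) * n.choose i * ((i - 1).choose k * (i : ℤ) ^ (n - 1 - k)) =
      if k + 1 = n then 1 else 0 := by
  rcases lt_trichotomy (k + 1) n with hlt | rfl | hgt
  · rw [if_neg hlt.ne]
    have hP : (descPochhammer ℤ (k + 1) * X ^ (n - 2 - k)).natDegree < n := by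
      rw [natDegree_mul (monic_descPochhammer ℤ _).ne_zero (pow_ne_zero _ X_ne_zero),
        descPochhammer_natDegree, natDegree_X_pow]
      omega
    apply mul_left_cancel₀ (Nat.cast_ne_zero.mpr (Nat.factorial_ne_zero k) : (k ! : ℤ) ≠ 0)
    rw [mul_zero, mul_sum, ← sum_range_alternating_choose_mul_eval_eq_zero hP, range_eq_Ico,
      sum_eq_sum_Ico_succ_bot (by omega), Ico_add_one_right_eq_Icc]
    simp_rw [← factorial_mul_choose_pred_mul_pow hlt]
    simp only [CharP.cast_eq_zero, zero_pow (show n - 1 - k ≠ 0 by omega), mul_zero, zero_add]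
    exact sum_congr rfl fun i _ => by ring
  · rw [if_pos rfl, sum_eq_single_of_mem (k + 1) (by simp)]
    · simp
    · intro i hi hne
      rw [Nat.choose_eq_zero_of_lt (n := i - 1) (by simp only [mem_Icc] at hi; omega)]
      simp
  · rw [if_neg hgt.ne']
    refine sum_eq_zero fun i hi => ?_
    rw [Nat.choose_eq_zero_of_lt (n := i - 1) (by simp only [mem_Icc] at hi; omega)]
    simp

theorem abel_identity_zero {n : ℕ} (hn : n ≠ 0) :
    ∑ i ∈ Icc 1 n, C ((n.choose i : ℤ) * (-(i : ℤ)) ^ (n - i)) * (X * (X + C (i : ℤ)) ^ (i - 1)) =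
      X ^ n := by
  ext (_ | k)
  · simp [coeff_X_pow, hn.symm]
  · rw [finsetSum_coeff, coeff_X_pow, ← sum_alternating_choose_mul_choose_pred_mul_pow n k]
    refine sum_congr rfl fun i hi => ?_
    rw [coeff_C_mul, coeff_X_mul, coeff_X_add_C_pow]
    rcases le_or_gt k (i - 1) with hk | hk
    · rw [neg_pow, show n - 1 - k = (n - i) + (i - 1 - k) by simp only [mem_Icc] at hi; omega, pow_add]
      ring
    · simp [Nat.choose_eq_zero_of_lt hk]

theorem Nat.choose_mul_choose_sub_comm (n m i : ℕ) :
    n.choose m * (n - m).choose i = n.choose i * (n - i).choose m := by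
  rcases le_or_gt (m + i) n with h | h
  · have hm := Nat.choose_mul (n := n) (Nat.le_add_right m i)
    have hi := Nat.choose_mul (n := n) (Nat.le_add_left i m)
    rw [Nat.add_sub_cancel_left] at hm
    rw [Nat.add_sub_cancel] at hi
    rw [← hm, ← hi, Nat.choose_symm_add]
  · grind

def restrictedAbelSum {R : Type*} [CommRing R] (a : ℕ → R) (n s : ℕ) : R :=
  ∑ i ∈ Icc s n, n.choose i * a i * ((s : R) - i - 1) ^ (n - i)

theorem restrictedAbelSum_succ {R : Type*} [CommRing R] (a : ℕ → R) {n s : ℕ} (h : s < n) :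
    restrictedAbelSum a n (s + 1) =
      ∑ m ∈ range (n + 1 - s), n.choose m * restrictedAbelSum a (n - m) s := by
  have inner : ∀ i ∈ Icc s n, ∑ m ∈ range (n - i + 1),
      n.choose m * ((n - m).choose i * a i * ((s : R) - i - 1) ^ (n - m - i)) =
        n.choose i * a i * ((s : R) - i) ^ (n - i) := by
    intro i _
    have hbinom := add_pow (1 : R) ((s : R) - i - 1) (n - i)
    rw [add_sub_cancel] at hbinom
    rw [hbinom, mul_sum]
    refine sum_congr rfl fun m _ => ?_
    rw [← mul_assoc, ← mul_assoc, ← Nat.cast_mul, Nat.choose_mul_choose_sub_comm,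
      Nat.cast_mul, one_pow, show n - m - i = n - i - m by omega]
    ring
  simp only [restrictedAbelSum, mul_sum]
  rw [sum_comm' (t' := Icc s n) (s' := fun i => range (n - i + 1)) (fun _ _ => by simp only [mem_range, mem_Icc]; omega),
    sum_congr rfl inner, Icc_eq_cons_Ioc h.le, sum_cons, ← Icc_add_one_left_eq_Ioc]
  simp only [sub_self, zero_pow (Nat.sub_ne_zero_of_lt h), mul_zero, zero_add]
  exact sum_congr rfl fun i _ => by push_cast; ring

section ParkingFunction

variable {α : Type*} [Fintype α] {s : ℕ}

/-- Spots are numbered from `0`: `f j = i` means that car `j` prefers spot `i + 1`. -/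
def IsParkingFunction (f : α → Fin s) : Prop :=
  ∀ i ∈ Icc 1 (Fintype.card α), i ≤ #{j | (f j : ℕ) < i}

instance (f : α → Fin s) : Decidable (IsParkingFunction f) := by
  unfold IsParkingFunction
  infer_instance

theorem card_filter_val_lt_of_le {n : ℕ} (f : α → Fin n) {i : ℕ} (hi : n ≤ i) :
    #{j | (f j : ℕ) < i} = Fintype.card α := by
  rw [filter_true_of_mem fun j _ => (f j).isLt.trans_le hi, card_univ]

theorem isParkingFunction_comp_equiv_iff {β : Type*} [Fintype β] (e : α ≃ β) (f : β → Fin s) :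
    IsParkingFunction (f ∘ e) ↔ IsParkingFunction f := by
  simp only [IsParkingFunction, Fintype.card_congr e, Function.comp_apply]
  refine forall₂_congr fun i _ => ?_
  have : #{j | (f (e j) : ℕ) < i} = #{j | (f j : ℕ) < i} := card_equiv e (by simp)
  rw [this]

variable [DecidableEq α]

variable (α s) in
noncomputable def onesEnumerator : ℤ[X] :=
  ∑ f : α → Fin s with IsParkingFunction f, X ^ #{j | (f j : ℕ) = 0}

def extendLast (T : Finset α) (g : {j // j ∉ T} → Fin s) (j : α) : Fin (s + 1) :=
  if h : j ∈ T then Fin.last s else (g ⟨j, h⟩).castSucc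

theorem card_filter_extendLast (T : Finset α) (g : {j // j ∉ T} → Fin s) {p : ℕ → Prop}
    [DecidablePred p] (hp : ¬ p s) :
    #{j | p (extendLast T g j)} = #{j | p (g j)} := by
  rw [← card_map (Function.Embedding.subtype _)]
  congr 1
  ext j
  simp only [mem_filter, mem_univ, true_and, mem_map, Function.Embedding.subtype_apply]
  by_cases hj : j ∈ T <;> simp [extendLast, hj, hp]

theorem isParkingFunction_extendLast_iff (T : Finset α) (g : {j // j ∉ T} → Fin s)
    (hs : 1 ≤ s) (hsα : s ≤ Fintype.card α) :
    IsParkingFunction (extendLast T g) ↔ #T + s ≤ Fintype.card α ∧ IsParkingFunction g := by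
  have hcard : Fintype.card {j // j ∉ T} = Fintype.card α - #T := by
    simp [Fintype.card_subtype_compl]
  have hTα : #T ≤ Fintype.card α := card_le_univ T
  have hlow : ∀ i ≤ s, #{j | (extendLast T g j : ℕ) < i} = #{j | (g j : ℕ) < i} :=
    fun i hi => card_filter_extendLast T g (p := (· < i)) (by simpa using hi)
  have hhigh : ∀ i, s ≤ i → #{j | (g j : ℕ) < i} = Fintype.card α - #T := fun i hi => by
    rw [card_filter_val_lt_of_le g hi, hcard]
  simp only [IsParkingFunction, mem_Icc, hcard]
  constructor
  · intro hf
    have hsT : s ≤ Fintype.card α - #T := hhigh s le_rfl ▸ hlow s le_rfl ▸ hf s ⟨hs, hsα⟩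
    refine ⟨by omega, fun i hi => ?_⟩
    rcases le_or_gt i s with his | his
    · exact hlow i his ▸ hf i ⟨hi.1, by omega⟩
    · rw [hhigh i his.le]
      exact hi.2
  · rintro ⟨hsT, hg⟩ i hi
    rcases le_or_gt i s with his | his
    · exact (hlow i his).symm ▸ hg i ⟨hi.1, by omega⟩
    · rw [card_filter_val_lt_of_le _ his]
      exact hi.2

theorem sum_fiber_last_eq_sum_extendLast {M : Type*} [AddCommMonoid M] (T : Finset α)
    (F : (α → Fin (s + 1)) → M) :
    ∑ f with ({j | f j = Fin.last s} : Finset α) = T, F f =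
      ∑ g : {j // j ∉ T} → Fin s, F (extendLast T g) := by
  symm
  refine sum_bij (fun g _ => extendLast T g) (fun g _ => ?_) (fun g₁ _ g₂ _ h => ?_)
    (fun f hf => ?_) (fun _ _ => rfl)
  · simp only [mem_filter, mem_univ, true_and]
    ext j
    by_cases hj : j ∈ T <;> simp [extendLast, hj, Fin.castSucc_ne_last]
  · funext b
    simpa [extendLast, b.2] using congrFun h b
  · simp only [mem_filter, mem_univ, true_and] at hf
    have hlast : ∀ j, f j = Fin.last s ↔ j ∈ T := fun j => by simp [← hf]
    refine ⟨fun b => (f b).castPred fun h => b.2 ((hlast b).1 h), mem_univ _, funext fun j => ?_⟩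
    by_cases hj : j ∈ T
    · simp [extendLast, hj, (hlast j).2 hj]
    · simp [extendLast, hj]

theorem onesEnumerator_succ (hs : 1 ≤ s) (hsα : s ≤ Fintype.card α) :
    onesEnumerator α (s + 1) =
      ∑ T : Finset α with #T + s ≤ Fintype.card α, onesEnumerator {j // j ∉ T} s := by
  have hzero : ∀ (T : Finset α) (g : {j // j ∉ T} → Fin s),
      #{j | (extendLast T g j : ℕ) = 0} = #{j | (g j : ℕ) = 0} := fun T g =>
    card_filter_extendLast T g (p := (· = 0)) (Nat.one_le_iff_ne_zero.mp hs)
  rw [onesEnumerator, sum_filter, ← sum_fiberwise _ (fun f => ({j | f j = Fin.last s} : Finset α)),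
    sum_filter]
  refine sum_congr rfl fun T _ => ?_
  rw [sum_fiber_last_eq_sum_extendLast, onesEnumerator, sum_filter]
  simp only [isParkingFunction_extendLast_iff T _ hs hsα, hzero]
  split_ifs with hT <;> simp [hT]

theorem onesEnumerator_one : onesEnumerator α 1 = X ^ Fintype.card α := by
  have hpark : IsParkingFunction (default : α → Fin 1) := fun i hi => by
    rw [card_filter_val_lt_of_le _ (mem_Icc.1 hi).1]
    exact (mem_Icc.1 hi).2
  rw [onesEnumerator, sum_filter, Fintype.sum_unique, if_pos hpark]
  simp

theorem onesEnumerator_congr {β : Type*} [Fintype β] [DecidableEq β] (e : α ≃ β) (s : ℕ) :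
    onesEnumerator α s = onesEnumerator β s := by
  refine (sum_equiv (e.symm.arrowCongr (Equiv.refl _)) (fun g => ?_) (fun g _ => ?_)).symm
  · simp only [mem_filter, mem_univ, true_and]
    exact (isParkingFunction_comp_equiv_iff e g).symm
  · have : #{j | (g (e j) : ℕ) = 0} = #{j | (g j : ℕ) = 0} := card_equiv e (by simp)
    simp [this]

end ParkingFunction

theorem onesEnumerator_fin_succ {n s : ℕ} (hs : 1 ≤ s) (h : s < n) :
    onesEnumerator (Fin n) (s + 1) =
      ∑ m ∈ range (n + 1 - s), (n.choose m : ℤ[X]) * onesEnumerator (Fin (n - m)) s := by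
  have hcongr : ∀ T : Finset (Fin n),
      onesEnumerator {j // j ∉ T} s = onesEnumerator (Fin (n - #T)) s := fun T =>
    onesEnumerator_congr (Fintype.equivFinOfCardEq (by simp [Fintype.card_subtype_compl])) s
  rw [onesEnumerator_succ hs (by simpa using h.le), sum_filter]
  simp only [hcongr, Fintype.card_fin]
  rw [← powerset_univ, sum_powerset_apply_card
    (fun m => if m + s ≤ n then onesEnumerator (Fin (n - m)) s else 0)]
  simp only [smul_ite, smul_zero, ← sum_filter, card_univ, Fintype.card_fin, nsmul_eq_mul]
  congr 1
  ext m
  simp only [mem_filter, mem_range]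
  omega

theorem onesEnumerator_fin_eq_restrictedAbelSum {n s : ℕ} (hs : 1 ≤ s) (h : s ≤ n) :
    onesEnumerator (Fin n) s = restrictedAbelSum (fun i => X * (X + C (i : ℤ)) ^ (i - 1)) n s := by
  induction s, hs using Nat.le_induction generalizing n with
  | base =>
    rw [onesEnumerator_one, Fintype.card_fin, ← abel_identity_zero (by omega : n ≠ 0)]
    refine sum_congr rfl fun i _ => ?_
    simp only [map_mul, map_pow, map_neg, map_natCast, Nat.cast_one, sub_sub_cancel_left]
    ring
  | succ s hs ih =>
    rw [onesEnumerator_fin_succ hs h, restrictedAbelSum_succ _ h]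
    refine sum_congr rfl fun m hm => ?_
    rw [ih (by simp only [mem_range] at hm; omega)]

open Polynomial in
open Classical in
theorem restricted_ones_enumerator_sum (n s : ℕ) (h1 : 1 ≤ s) (h2 : s ≤ n) :
    ∑ π ∈ Finset.univ.filter
        (fun π : Fin n → Fin s =>
          ∀ i ∈ Finset.Icc 1 n,
            i ≤ (Finset.univ.filter (fun j => (π j).val + 1 ≤ i)).card),
      (X : Polynomial ℤ) ^ (Finset.univ.filter (fun j => (π j).val + 1 = 1)).card
    = ∑ i ∈ Finset.Icc s n,
        C (n.choose i : ℤ) * X * (X + C (i : ℤ)) ^ (i - 1) *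
          C (((s : ℤ) - i - 1) ^ (n - i)) := by
  calc _ = onesEnumerator (Fin n) s := by
        simp [onesEnumerator, IsParkingFunction, Nat.add_one_le_iff]
    _ = _ := onesEnumerator_fin_eq_restrictedAbelSum h1 h2
    _ = _ := by
        simp [restrictedAbelSum, mul_assoc]
end

section
/- The counts of nondecreasing restricted parking functions satisfy the recurrence #PF↑_{n|[s]} = #PF↑_{n−1|[s]} + #PF↑_{n|[s−1]} for 2 ≤ s ≤ n, with #PF↑_{n|[1]} = 1 for all n ≥ 1. -/
def IsNDRPF (n s : ℕ) (π : Fin n → ℕ) : Prop :=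
  Monotone π ∧ (∀ j, π j ∈ Finset.Icc 1 s) ∧ ∀ j : Fin n, π j ≤ j.val + 1

/-- The number of nondecreasing `[s]`-restricted parking functions on `n` cars. -/
noncomputable def ndCount (n s : ℕ) : ℕ := {π : Fin n → ℕ | IsNDRPF n s π}.ncard

/-! A nondecreasing `[s]`-restricted parking function either takes the value `s` on its last car,
and then deleting that car leaves one on `n - 1` cars (this is reversible as long as `s ≤ n`), or it
never takes the value `s`, and then it is `[s - 1]`-restricted. -/

theorem Fin.monotone_snoc {α : Type*} [Preorder α] {n : ℕ} {f : Fin n → α} {x : α}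
    (hf : Monotone f) (hx : ∀ i, f i ≤ x) : Monotone (Fin.snoc f x : Fin (n + 1) → α) := by
  intro i j hij
  induction j using Fin.lastCases with
  | last =>
    induction i using Fin.lastCases with
    | last => exact le_rfl
    | cast i => simpa only [Fin.snoc_castSucc, Fin.snoc_last] using hx i
  | cast j =>
    induction i using Fin.lastCases with
    | last => exact absurd hij (not_le.2 (Fin.castSucc_lt_last j))
    | cast i => simpa only [Fin.snoc_castSucc] using hf (Fin.castSucc_le_castSucc_iff.1 hij)

theorem setOf_isNDRPF_finite (n s : ℕ) : {π : Fin n → ℕ | IsNDRPF n s π}.Finite :=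
  (Set.Finite.pi fun _ => Set.finite_Icc 1 s).subset fun _ hπ j _ =>
    by simpa only [Finset.coe_Icc] using Finset.mem_coe.2 (hπ.2.1 j)

theorem IsNDRPF.mono_bound {n s t : ℕ} {π : Fin n → ℕ} (hπ : IsNDRPF n s π) (hst : s ≤ t) :
    IsNDRPF n t π :=
  ⟨hπ.1, fun j => Finset.Icc_subset_Icc le_rfl hst (hπ.2.1 j), hπ.2.2⟩

theorem isNDRPF_snoc_iff {m s : ℕ} (hs : 1 ≤ s) (hsm : s ≤ m + 1) (π : Fin m → ℕ) :
    IsNDRPF (m + 1) s (Fin.snoc π s) ↔ IsNDRPF m s π := by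
  constructor
  · rintro ⟨hmono, hrange, hcar⟩
    refine ⟨fun i j hij => ?_, fun j => ?_, fun j => ?_⟩
    · simpa only [Fin.snoc_castSucc] using hmono (Fin.castSucc_le_castSucc_iff.2 hij)
    · simpa only [Fin.snoc_castSucc] using hrange j.castSucc
    · simpa only [Fin.snoc_castSucc, Fin.val_castSucc] using hcar j.castSucc
  · rintro ⟨hmono, hrange, hcar⟩
    refine ⟨Fin.monotone_snoc hmono fun i => (Finset.mem_Icc.1 (hrange i)).2,
      fun j => ?_, fun j => ?_⟩
    · induction j using Fin.lastCases with
      | last => simpa only [Fin.snoc_last] using Finset.mem_Icc.2 ⟨hs, le_rfl⟩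
      | cast i => simpa only [Fin.snoc_castSucc] using hrange i
    · induction j using Fin.lastCases with
      | last => simpa only [Fin.snoc_last, Fin.val_last] using hsm
      | cast i => simpa only [Fin.snoc_castSucc, Fin.val_castSucc] using hcar i

theorem setOf_isNDRPF_last_eq_image {m s : ℕ} (hs : 1 ≤ s) (hsm : s ≤ m + 1) :
    {π : Fin (m + 1) → ℕ | IsNDRPF (m + 1) s π ∧ π (Fin.last m) = s} =
      (Fin.snoc · s) '' {π : Fin m → ℕ | IsNDRPF m s π} := by
  ext π
  constructor
  · rintro ⟨hπ, hlast⟩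
    have hsnoc : Fin.snoc (Fin.init π) s = π := hlast ▸ Fin.snoc_init_self π
    exact ⟨Fin.init π, (isNDRPF_snoc_iff hs hsm _).1 (by rwa [hsnoc]), hsnoc⟩
  · rintro ⟨σ, hσ, rfl⟩
    exact ⟨(isNDRPF_snoc_iff hs hsm σ).2 hσ, Fin.snoc_last _ _⟩

theorem setOf_isNDRPF_eq_union (m s : ℕ) :
    {π : Fin (m + 1) → ℕ | IsNDRPF (m + 1) s π} =
      {π | IsNDRPF (m + 1) s π ∧ π (Fin.last m) = s} ∪ {π | IsNDRPF (m + 1) (s - 1) π} := by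
  ext π
  constructor
  · rintro ⟨hmono, hrange, hcar⟩
    rcases (Finset.mem_Icc.1 (hrange (Fin.last m))).2.eq_or_lt with hlast | hlast
    · exact Or.inl ⟨⟨hmono, hrange, hcar⟩, hlast⟩
    · refine Or.inr ⟨hmono, fun j => ?_, hcar⟩
      have hj := Finset.mem_Icc.1 (hrange j)
      have hle := hmono (Fin.le_last j)
      exact Finset.mem_Icc.2 ⟨hj.1, by omega⟩
  · rintro (⟨hπ, -⟩ | hπ)
    · exact hπ
    · exact hπ.mono_bound (Nat.sub_le s 1)

theorem disjoint_setOf_isNDRPF_last_eq (m s : ℕ) :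
    Disjoint {π : Fin (m + 1) → ℕ | IsNDRPF (m + 1) s π ∧ π (Fin.last m) = s}
      {π | IsNDRPF (m + 1) (s - 1) π} := by
  refine Set.disjoint_left.2 fun π ⟨_, hlast⟩ hπ => ?_
  have := Finset.mem_Icc.1 (hπ.2.1 (Fin.last m))
  omega

theorem ndCount_succ {m s : ℕ} (hs : 1 ≤ s) (hsm : s ≤ m + 1) :
    ndCount (m + 1) s = ndCount m s + ndCount (m + 1) (s - 1) := by
  have hfin := setOf_isNDRPF_finite (m + 1) s
  rw [ndCount, setOf_isNDRPF_eq_union, Set.ncard_union_eq (disjoint_setOf_isNDRPF_last_eq m s)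
      (hfin.subset fun _ hπ => hπ.1) (hfin.subset fun _ hπ => hπ.mono_bound (Nat.sub_le s 1)),
    setOf_isNDRPF_last_eq_image hs hsm, Set.ncard_image_of_injective _ (Fin.snoc_left_injective (α := fun _ => ℕ) s)]
  rfl

theorem ndCount_one (n : ℕ) : ndCount n 1 = 1 := by
  have hconst : {π : Fin n → ℕ | IsNDRPF n 1 π} = {fun _ => 1} := by
    ext π
    refine ⟨fun hπ => funext fun j => ?_, ?_⟩
    · have := Finset.mem_Icc.1 (hπ.2.1 j)
      omega
    · rintro rfl
      exact ⟨monotone_const, fun _ => Finset.mem_Icc.2 ⟨le_rfl, le_rfl⟩, fun _ => Nat.le_add_left 1 _⟩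
  rw [ndCount, hconst, Set.ncard_singleton]

theorem nondecreasing_recurrence :
    (∀ n s : ℕ, 2 ≤ s → s ≤ n →
      ndCount n s = ndCount (n - 1) s + ndCount n (s - 1)) ∧
    (∀ n : ℕ, 1 ≤ n → ndCount n 1 = 1) := by
  refine ⟨fun n s hs hsn => ?_, fun n _ => ndCount_one n⟩
  obtain ⟨m, rfl⟩ : ∃ m, n = m + 1 := ⟨n - 1, by omega⟩
  exact ndCount_succ (by omega) hsn
end

section
/- For g, s positive integers, let S = {1, g+1, 2g+1, …, (s−1)g+1}. The number of S-restricted parking functions on gs−1 cars is s^{gs−2}. -/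
/-!
Encode a parking function with values in `{t g + 1 | t < s}` by the residues `σ j = t` in
`ZMod s`. The parking condition only has to be checked at the spots `i = t g`, where it says
that the first `t` blocks of `g` spots are preferred by at least `t g` cars. Adding a constant
to `σ` rotates the blocks cyclically. Since the `g s - 1` cars fall one short of filling all `s`
blocks, the partial sums of `#(cars preferring block u) - g` drop by `1` per period, and the
cycle lemma shows that exactly one of the `s` rotations of any `σ` is a parking function.
Hence the count is `s ^ (g s - 1) / s`.
-/

open Finset

theorem cycle_lemma {s : ℕ} (hs : 0 < s) (f : ℕ → ℤ) (hf : ∀ n, f (n + s) = f n - 1) :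
    ∃! k, k < s ∧ ∀ t, 0 < t → t < s → f k ≤ f (k + t) := by
  have hmin : ∃ k, k < s ∧ ∀ j < s, f k ≤ f j := by
    obtain ⟨k, hk, hkmin⟩ := exists_min_image (range s) f ⟨0, mem_range.2 hs⟩
    exact ⟨k, mem_range.1 hk, fun j hj => hkmin j (mem_range.2 hj)⟩
  set k := Nat.find hmin
  obtain ⟨hks, hkmin⟩ : k < s ∧ ∀ j < s, f k ≤ f j := Nat.find_spec hmin
  have hk : ∀ t, 0 < t → t < s → f k ≤ f (k + t) := by
    intro t ht hts
    rcases lt_or_ge (k + t) s with hlt | hge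
    · exact hkmin _ hlt
    · have hwrap : f (k + t) = f (k + t - s) - 1 := by rw [← hf, Nat.sub_add_cancel hge]
      -- `k` is the first minimiser, so the strictly earlier index `k + t - s` is not one
      have hearlier : f k < f (k + t - s) := (hkmin _ (by omega)).lt_of_ne fun heq =>
        Nat.find_min hmin (show k + t - s < k by omega) ⟨by omega, fun j hj => heq ▸ hkmin j hj⟩
      omega
  -- two good starts `a < b` would give `f a ≤ f b ≤ f (a + s) = f a - 1`
  have hsingle : ∀ a b, a < b → b < s → (∀ t, 0 < t → t < s → f a ≤ f (a + t)) →
      ¬ ∀ t, 0 < t → t < s → f b ≤ f (b + t) := by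
    intro a b hab hbs ha hb
    have hab' := ha (b - a) (by omega) (by omega)
    have hba := hb (a + s - b) (by omega) (by omega)
    rw [Nat.add_sub_cancel' hab.le] at hab'
    rw [Nat.add_sub_cancel' (by omega), hf] at hba
    omega
  refine ⟨k, ⟨hks, hk⟩, fun k' ⟨hk's, hk'⟩ => ?_⟩
  rcases lt_trichotomy k' k with hlt | heq | hgt
  · exact absurd hk (hsingle k' k hlt hks hk')
  · exact heq
  · exact absurd hk' (hsingle k k' hgt hk's hk)

theorem card_subtype_mul_card_of_existsUnique_vadd {G X : Type*} [AddGroup G] [AddAction G X]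
    {P : X → Prop} (h : ∀ x, ∃! c : G, P (c +ᵥ x)) :
    Nat.card {x // P x} * Nat.card G = Nat.card X := by
  rw [← Nat.card_prod]
  refine Nat.card_congr (Equiv.ofBijective (fun p => p.2 +ᵥ p.1.1) ⟨?_, fun y => ?_⟩)
  · rintro ⟨⟨x, hx⟩, c⟩ ⟨⟨x', hx'⟩, c'⟩ (heq : c +ᵥ x = c' +ᵥ x')
    have hneg : -c = -c' :=
      (h (c +ᵥ x)).unique (by rwa [neg_vadd_vadd]) (by rwa [heq, neg_vadd_vadd])
    obtain rfl : c = c' := neg_injective hneg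
    obtain rfl : x = x' := (vadd_left_cancel_iff c).1 heq
    rfl
  · obtain ⟨c, hc, -⟩ := h y
    exact ⟨(⟨c +ᵥ y, hc⟩, -c), neg_vadd_vadd c y⟩

section BlockParking

variable {ι : Type*} [Fintype ι] {s g : ℕ}

/-- `σ j = t` records that car `j` prefers spot `t * g + 1`. -/
def BlockParking (g : ℕ) (σ : ι → ZMod s) : Prop :=
  ∀ t, 0 < t → t < s → t * g ≤ #{j | (σ j).val < t}

def excess (g : ℕ) (σ : ι → ZMod s) (n : ℕ) : ℤ :=
  ∑ u ∈ range n, ((#{j | σ j = u} : ℤ) - g)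

theorem card_val_sub_lt_eq_sum [NeZero s] (σ : ι → ZMod s) (k : ℕ) {t : ℕ} (ht : t ≤ s) :
    #{j | (σ j - k).val < t} = ∑ u ∈ Ico k (k + t), #{j | σ j = u} := by
  rw [card_eq_sum_card_fiberwise (f := fun j => (σ j - k).val) (t := range t)
    (fun j hj => mem_range.2 (mem_filter.1 hj).2), sum_Ico_eq_sum_range, Nat.add_sub_cancel_left]
  refine sum_congr rfl fun v hv => congrArg card ?_
  have hvs : v < s := (mem_range.1 hv).trans_le ht
  ext j
  simp only [filter_filter, mem_filter, mem_univ, true_and]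
  rw [Nat.cast_add, ← sub_eq_iff_eq_add']
  constructor
  · rintro ⟨-, h⟩
    rw [← h, ZMod.natCast_zmod_val]
  · rintro h
    rw [h, ZMod.val_natCast_of_lt hvs]
    exact ⟨mem_range.1 hv, rfl⟩

theorem excess_add_sub (σ : ι → ZMod s) (k t : ℕ) :
    excess g σ (k + t) - excess g σ k = ∑ u ∈ Ico k (k + t), (#{j | σ j = u} : ℤ) - t * g := by
  rw [excess, excess, ← sum_Ico_eq_sub _ (Nat.le_add_right k t), sum_sub_distrib, sum_const,
    Nat.card_Ico, Nat.add_sub_cancel_left, nsmul_eq_mul]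

theorem excess_add_period [NeZero s] (hcard : Fintype.card ι + 1 = g * s) (σ : ι → ZMod s) (n : ℕ) :
    excess g σ (n + s) = excess g σ n - 1 := by
  have hwindow : ∑ u ∈ Ico n (n + s), #{j | σ j = u} = Fintype.card ι := by
    rw [← card_val_sub_lt_eq_sum σ n le_rfl, filter_true_of_mem fun j _ => ZMod.val_lt _, card_univ]
  have hdiff := excess_add_sub (g := g) σ n s
  rw [← Nat.cast_sum, hwindow] at hdiff
  have hcard' : (Fintype.card ι : ℤ) + 1 = g * s := by exact_mod_cast hcard
  linear_combination hdiff + hcard'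

theorem blockParking_sub_natCast_iff [NeZero s] (σ : ι → ZMod s) (k : ℕ) :
    BlockParking g (fun j => σ j - (k : ZMod s)) ↔
      ∀ t, 0 < t → t < s → excess g σ k ≤ excess g σ (k + t) := by
  refine forall_congr' fun t => imp_congr_right fun _ => imp_congr_right fun hts => ?_
  rw [card_val_sub_lt_eq_sum σ k hts.le, ← sub_nonneg (a := excess g σ (k + t)), excess_add_sub,
    sub_nonneg]
  norm_cast

theorem existsUnique_blockParking_vadd [NeZero s] (hcard : Fintype.card ι + 1 = g * s) (σ : ι → ZMod s) :
    ∃! c : ZMod s, BlockParking g (c +ᵥ σ) := by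
  have hshift : ∀ c : ZMod s, c +ᵥ σ = fun j => σ j - ((-c).val : ZMod s) := fun c => by
    funext j
    rw [Pi.vadd_apply, vadd_eq_add, ZMod.natCast_zmod_val, sub_neg_eq_add, add_comm]
  obtain ⟨k, ⟨hks, hk⟩, huniq⟩ := cycle_lemma (NeZero.pos s) _ (excess_add_period hcard σ)
  refine ⟨-k, ?_, fun c (hc : BlockParking g (c +ᵥ σ)) => ?_⟩
  · show BlockParking g (-(k : ZMod s) +ᵥ σ)
    rwa [hshift, neg_neg, ZMod.val_natCast_of_lt hks, blockParking_sub_natCast_iff]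
  · rw [hshift, blockParking_sub_natCast_iff] at hc
    rw [← huniq _ ⟨ZMod.val_lt _, hc⟩, ZMod.natCast_zmod_val, neg_neg]

theorem card_blockParking_mul [NeZero s] (hcard : Fintype.card ι + 1 = g * s) :
    Nat.card {σ : ι → ZMod s // BlockParking g σ} * s = s ^ Fintype.card ι := by
  have := card_subtype_mul_card_of_existsUnique_vadd (existsUnique_blockParking_vadd hcard)
  rwa [Nat.card_zmod, Nat.card_fun, Nat.card_zmod, Nat.card_eq_fintype_card (α := ι)] at this

theorem forall_le_card_iff_blockParking [NeZero s] (hg : 0 < g) (hι : (s - 1) * g ≤ Fintype.card ι)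
    (σ : ι → ZMod s) :
    (∀ i ∈ Icc 1 (Fintype.card ι), i ≤ #{j | (σ j).val * g + 1 ≤ i}) ↔ BlockParking g σ := by
  constructor
  · intro h t ht hts
    have hspot : ∀ u : ℕ, u * g + 1 ≤ t * g ↔ u < t := fun u => by
      rw [Nat.add_one_le_iff, Nat.mul_lt_mul_right hg]
    have hti : t * g ∈ Icc 1 (Fintype.card ι) := mem_Icc.2
      ⟨Nat.mul_pos ht hg, le_trans (Nat.mul_le_mul_right g (by omega)) hι⟩
    simpa only [hspot] using h _ hti
  · intro h i hi
    obtain ⟨hi1, hin⟩ := mem_Icc.1 hi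
    have hspot : ∀ u : ℕ, u * g + 1 ≤ i ↔ u < (i - 1) / g + 1 := fun u => by
      rw [Nat.lt_add_one_iff, Nat.le_div_iff_mul_le hg]
      omega
    simp only [hspot]
    rcases lt_or_ge ((i - 1) / g + 1) s with hts | hts
    · refine le_trans ?_ (h _ (Nat.succ_pos _) hts)
      have := Nat.lt_div_mul_add (a := i - 1) hg
      rw [add_one_mul]
      omega
    · rwa [filter_true_of_mem fun j _ => (ZMod.val_lt (σ j)).trans_le hts, card_univ]

theorem setOf_restrictedParking_eq_image [NeZero s] (hg : 0 < g) (hι : (s - 1) * g ≤ Fintype.card ι) :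
    {π : ι → ℕ | (∀ j, π j ∈ (range s).image (fun t => t * g + 1)) ∧
        ∀ i ∈ Icc 1 (Fintype.card ι), i ≤ #{j | π j ≤ i}} =
      (fun σ j => (σ j).val * g + 1) '' {σ : ι → ZMod s | BlockParking g σ} := by
  ext π
  simp only [Set.mem_ofPred_eq, Set.mem_image, mem_image, mem_range]
  constructor
  · rintro ⟨hS, hpark⟩
    choose τ hτs hτ using hS
    have hπ : (fun j => ((τ j : ZMod s)).val * g + 1) = π :=
      funext fun j => by rw [ZMod.val_natCast_of_lt (hτs j), hτ]
    rw [← hπ] at hpark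
    exact ⟨_, (forall_le_card_iff_blockParking hg hι _).1 hpark, hπ⟩
  · rintro ⟨σ, hσ, rfl⟩
    exact ⟨fun j => ⟨(σ j).val, ZMod.val_lt _, rfl⟩, (forall_le_card_iff_blockParking hg hι σ).2 hσ⟩

end BlockParking

theorem count_modular_restricted (g s : ℕ) (hg : 0 < g) (hs : 0 < s) :
    {π : Fin (g * s - 1) → ℕ |
        (∀ j, π j ∈ (Finset.range s).image (fun t => t * g + 1)) ∧
        ∀ i ∈ Finset.Icc 1 (g * s - 1),
          i ≤ (Finset.univ.filter (fun j => π j ≤ i)).card}.ncard =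
      s ^ (g * s - 2) := by
  have : NeZero s := ⟨hs.ne'⟩
  have hgs : 0 < g * s := Nat.mul_pos hg hs
  have hcard : Fintype.card (Fin (g * s - 1)) + 1 = g * s := by
    rw [Fintype.card_fin]; omega
  have hι : (s - 1) * g ≤ Fintype.card (Fin (g * s - 1)) := by
    rw [Fintype.card_fin, Nat.sub_one_mul, Nat.mul_comm]; omega
  have hinj : Function.Injective fun (σ : Fin (g * s - 1) → ZMod s) j => (σ j).val * g + 1 :=
    fun σ σ' h => funext fun j => ZMod.val_injective _ <|
      Nat.eq_of_mul_eq_mul_right hg (Nat.add_right_cancel (congrFun h j))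
  have himage := setOf_restrictedParking_eq_image hg hι
  have hblocks := card_blockParking_mul (g := g) hcard
  rw [Fintype.card_fin] at himage hblocks
  rw [himage, Set.ncard_image_of_injective _ hinj, ← Nat.card_coe_set_eq]
  apply Nat.eq_of_mul_eq_mul_right hs
  rw [Set.coe_ofPred, hblocks, ← pow_succ]
  rcases (by omega : g * s - 1 = g * s - 2 + 1 ∨ g * s = 1) with h | h
  · rw [h]
  · rw [Nat.eq_one_of_mul_eq_one_left h]; simp
end
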